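/- Let λ > 0 and let u be a positive solution of (P_λ) with u(x) < r on [0,1]. Then u''(0) > 0 and u''(1) > 0. -/

import Mathlib

/-
Since `u'''' = λ f(u) > 0`, `u'''` is strictly increasing and `u''` is strictly convex. As `u`
vanishes at both ends without vanishing identically, `u` is not convex, so `u''(x₀) < 0` for some
`x₀`. If `u''(0) ≤ 0`, strict convexity forces `u'' < 0` on `(0, x₀)`; then `u'` decreases from
`u'(0) = 0`, so `u(x₀) < u(0) = 0`, contradicting `u ≥ 0`. The endpoint `1` follows by applying
this to `x ↦ u(1 - x)`, which is again a positive solution.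
-/

open Set Filter

/-- `u` is a positive solution of the clamped problem `u'''' = lam * f (u)` on `(0,1)`,
`u(0) = u(1) = u'(0) = u'(1) = 0`, with values in `[0, r)` (the domain of `f`). -/
def IsPosSol (f : ℝ → ℝ) (r lam : ℝ) (u : ℝ → ℝ) : Prop :=
  ContDiffOn ℝ 4 u (Set.Icc 0 1) ∧
  (∀ x ∈ Set.Icc (0:ℝ) 1, u x < r) ∧
  (∀ x ∈ Set.Ioo (0:ℝ) 1, iteratedDerivWithin 4 u (Set.Icc 0 1) x = lam * f (u x)) ∧
  u 0 = 0 ∧ u 1 = 0 ∧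
  derivWithin u (Set.Icc 0 1) 0 = 0 ∧ derivWithin u (Set.Icc 0 1) 1 = 0 ∧
  (∀ x ∈ Set.Ioo (0:ℝ) 1, 0 ≤ u x) ∧
  (∃ x ∈ Set.Ioo (0:ℝ) 1, u x ≠ 0)

open scoped Pointwise in
theorem iteratedDerivWithin_comp_reflect_Icc (u : ℝ → ℝ) (n : ℕ) (a b x : ℝ) :
    iteratedDerivWithin n (fun y => u (a + b - y)) (Icc a b) x
      = (-1) ^ n * iteratedDerivWithin n u (Icc a b) (a + b - x) := by
  have hIcc : (a + b) +ᵥ -Icc a b = Icc a b := by simp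
  simp only [iteratedDerivWithin_comp_const_sub, hIcc, smul_eq_mul]

section Icc

variable {u : ℝ → ℝ} {a b x : ℝ}

theorem ContDiffOn.hasDerivAt_iteratedDerivWithin_Icc {n k : ℕ} (hu : ContDiffOn ℝ n u (Icc a b))
    (hk : k < n) (hx : x ∈ Ioo a b) :
    HasDerivAt (iteratedDerivWithin k u (Icc a b))
      (iteratedDerivWithin (k + 1) u (Icc a b) x) x := by
  have hdiff := hu.differentiableOn_iteratedDerivWithin (by exact_mod_cast hk)
    (uniqueDiffOn_Icc (hx.1.trans hx.2)) x (Ioo_subset_Icc_self hx)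
  have hnhds : Icc a b ∈ nhds x := Icc_mem_nhds hx.1 hx.2
  rw [iteratedDerivWithin_succ, derivWithin_of_mem_nhds hnhds]
  exact (hdiff.differentiableAt hnhds).hasDerivAt

theorem ContDiffOn.hasDerivAt_Icc {n : ℕ} (hu : ContDiffOn ℝ n u (Icc a b)) (hn : 0 < n)
    (hx : x ∈ Ioo a b) : HasDerivAt u (iteratedDerivWithin 1 u (Icc a b) x) x := by
  simpa only [iteratedDerivWithin_zero] using hu.hasDerivAt_iteratedDerivWithin_Icc hn hx

theorem ContDiffOn.strictConvexOn_iteratedDerivWithin_two (hab : a < b)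
    (hu : ContDiffOn ℝ 4 u (Icc a b))
    (hpos : ∀ x ∈ Ioo a b, 0 < iteratedDerivWithin 4 u (Icc a b) x) :
    StrictConvexOn ℝ (Icc a b) (iteratedDerivWithin 2 u (Icc a b)) := by
  rw [← interior_Icc] at hpos
  have hderiv (k : ℕ) (hk : k < 4) (x : ℝ) (hx : x ∈ interior (Icc a b)) :
      HasDerivAt (iteratedDerivWithin k u (Icc a b))
        (iteratedDerivWithin (k + 1) u (Icc a b) x) x :=
    hu.hasDerivAt_iteratedDerivWithin_Icc (by exact_mod_cast hk) (by rwa [← interior_Icc])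
  have hmono : StrictMonoOn (iteratedDerivWithin 3 u (Icc a b)) (Icc a b) :=
    strictMonoOn_of_hasDerivWithinAt_pos (convex_Icc a b)
      (hu.continuousOn_iteratedDerivWithin (by norm_num) (uniqueDiffOn_Icc hab))
      (fun x hx => (hderiv 3 (by norm_num) x hx).hasDerivWithinAt) hpos
  refine StrictMonoOn.strictConvexOn_of_deriv (convex_Icc a b)
    (hu.continuousOn_iteratedDerivWithin (by norm_num) (uniqueDiffOn_Icc hab)) ?_
  exact (hmono.mono interior_subset).congr fun x hx => (hderiv 2 (by norm_num) x hx).deriv.symm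

end Icc

section SecondDerivative

variable {u u' u'' : ℝ → ℝ} {a b : ℝ}

theorem exists_hasDerivAt2_neg_of_pos_of_ends_nonpos {c : ℝ} (hu : ContinuousOn u (Icc a b))
    (hu' : ∀ x ∈ Ioo a b, HasDerivAt u (u' x) x)
    (hu'' : ∀ x ∈ Ioo a b, HasDerivAt u' (u'' x) x)
    (ha : u a ≤ 0) (hb : u b ≤ 0) (hc : c ∈ Icc a b) (hpos : 0 < u c) :
    ∃ x ∈ Ioo a b, u'' x < 0 := by
  by_contra! hnonneg
  rw [← interior_Icc] at hu' hu'' hnonneg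
  have hconvex : ConvexOn ℝ (Icc a b) u :=
    convexOn_of_hasDerivWithinAt2_nonneg (convex_Icc a b) hu
      (fun x hx => (hu' x hx).hasDerivWithinAt) (fun x hx => (hu'' x hx).hasDerivWithinAt) hnonneg
  have hab : a ≤ b := hc.1.trans hc.2
  have := hconvex.le_on_segment (left_mem_Icc.2 hab) (right_mem_Icc.2 hab)
    (by rwa [segment_eq_Icc hab])
  linarith [max_le ha hb]

theorem strictAntiOn_of_hasDerivAt2_neg_of_left_eq_zero (hu : ContinuousOn u (Icc a b))
    (hu'_cont : ContinuousOn u' (Icc a b))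
    (hu' : ∀ x ∈ Ioo a b, HasDerivAt u (u' x) x)
    (hu'' : ∀ x ∈ Ioo a b, HasDerivAt u' (u'' x) x)
    (ha : u' a = 0) (hneg : ∀ x ∈ Ioo a b, u'' x < 0) :
    StrictAntiOn u (Icc a b) := by
  rw [← interior_Icc] at hu' hu'' hneg
  have hanti : StrictAntiOn u' (Icc a b) := strictAntiOn_of_hasDerivWithinAt_neg (convex_Icc a b)
    hu'_cont (fun x hx => (hu'' x hx).hasDerivWithinAt) hneg
  refine strictAntiOn_of_hasDerivWithinAt_neg (convex_Icc a b) hu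
    (fun x hx => (hu' x hx).hasDerivWithinAt) fun x hx => ?_
  rw [interior_Icc] at hx
  rw [← ha]
  exact hanti (left_mem_Icc.2 (hx.1.trans hx.2).le) (Ioo_subset_Icc_self hx) hx.1

end SecondDerivative

namespace IsPosSol

variable {f : ℝ → ℝ} {r lam : ℝ} {u : ℝ → ℝ}

theorem comp_one_sub (hu : IsPosSol f r lam u) : IsPosSol f r lam (fun x => u (1 - x)) := by
  obtain ⟨hC, hlt, heq, hu0, hu1, hd0, hd1, hnn, x₁, hx₁, hx₁ne⟩ := hu
  have hreflect (n : ℕ) (x : ℝ) := iteratedDerivWithin_comp_reflect_Icc u n 0 1 x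
  simp only [zero_add] at hreflect
  have hmem {x : ℝ} (hx : x ∈ Icc (0:ℝ) 1) : 1 - x ∈ Icc (0:ℝ) 1 :=
    ⟨by linarith [hx.2], by linarith [hx.1]⟩
  have hmem' {x : ℝ} (hx : x ∈ Ioo (0:ℝ) 1) : 1 - x ∈ Ioo (0:ℝ) 1 :=
    ⟨by linarith [hx.2], by linarith [hx.1]⟩
  refine ⟨hC.comp (by fun_prop) fun x hx => hmem hx, fun x hx => hlt _ (hmem hx),
    fun x hx => ?_, by simpa using hu1, by simpa using hu0, ?_, ?_,
    fun x hx => hnn _ (hmem' hx), ⟨1 - x₁, hmem' hx₁, by simpa using hx₁ne⟩⟩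
  · rw [hreflect, heq _ (hmem' hx)]; norm_num
  · rw [← iteratedDerivWithin_one, hreflect, iteratedDerivWithin_one]; simpa using hd1
  · rw [← iteratedDerivWithin_one, hreflect, iteratedDerivWithin_one]; simpa using hd0

theorem iteratedDerivWithin_four_pos (hu : IsPosSol f r lam u) (hlam : 0 < lam)
    (hfpos : ∀ s ∈ Ico (0:ℝ) r, 0 < f s) :
    ∀ x ∈ Ioo (0:ℝ) 1, 0 < iteratedDerivWithin 4 u (Icc 0 1) x := by
  obtain ⟨-, hlt, heq, -, -, -, -, hnn, -⟩ := hu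
  intro x hx
  rw [heq x hx]
  exact mul_pos hlam (hfpos _ ⟨hnn x hx, hlt x (Ioo_subset_Icc_self hx)⟩)

theorem exists_iteratedDerivWithin_two_neg (hu : IsPosSol f r lam u) :
    ∃ x₀ ∈ Ioo (0:ℝ) 1, iteratedDerivWithin 2 u (Icc 0 1) x₀ < 0 := by
  obtain ⟨hC, -, -, hu0, hu1, -, -, hnn, x₁, hx₁, hx₁ne⟩ := hu
  exact exists_hasDerivAt2_neg_of_pos_of_ends_nonpos hC.continuousOn
    (fun x hx => hC.hasDerivAt_Icc (by norm_num) hx)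
    (fun x hx => hC.hasDerivAt_iteratedDerivWithin_Icc (k := 1) (by norm_num) hx) hu0.le hu1.le
    (Ioo_subset_Icc_self hx₁) ((hnn x₁ hx₁).lt_of_ne' hx₁ne)

theorem iteratedDerivWithin_two_zero_pos (hu : IsPosSol f r lam u) (hlam : 0 < lam)
    (hfpos : ∀ s ∈ Ico (0:ℝ) r, 0 < f s) : 0 < iteratedDerivWithin 2 u (Icc 0 1) 0 := by
  obtain ⟨x₀, hx₀, hx₀neg⟩ := hu.exists_iteratedDerivWithin_two_neg
  have hconvex := hu.1.strictConvexOn_iteratedDerivWithin_two one_pos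
    (hu.iteratedDerivWithin_four_pos hlam hfpos)
  obtain ⟨hC, -, -, hu0, -, hd0, -, hnn, -⟩ := hu
  by_contra! hle
  have hneg : ∀ x ∈ Ioo 0 x₀, iteratedDerivWithin 2 u (Icc 0 1) x < 0 := fun x hx =>
    (hconvex.lt_on_openSegment (left_mem_Icc.2 zero_le_one) (Ioo_subset_Icc_self hx₀) hx₀.1.ne
      (by rwa [openSegment_eq_Ioo hx₀.1])).trans_le (max_le hle hx₀neg.le)
  have hsub : Icc 0 x₀ ⊆ Icc (0:ℝ) 1 := Icc_subset_Icc_right hx₀.2.le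
  have hsub' : Ioo 0 x₀ ⊆ Ioo (0:ℝ) 1 := Ioo_subset_Ioo_right hx₀.2.le
  have hanti : StrictAntiOn u (Icc 0 x₀) :=
    strictAntiOn_of_hasDerivAt2_neg_of_left_eq_zero (hC.continuousOn.mono hsub)
      ((hC.continuousOn_iteratedDerivWithin (by norm_num) (uniqueDiffOn_Icc one_pos)).mono hsub)
      (fun x hx => hC.hasDerivAt_Icc (by norm_num) (hsub' hx))
      (fun x hx => hC.hasDerivAt_iteratedDerivWithin_Icc (k := 1) (by norm_num) (hsub' hx))
      (by rwa [iteratedDerivWithin_one]) hneg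
  have := hanti (left_mem_Icc.2 hx₀.1.le) (right_mem_Icc.2 hx₀.1.le) hx₀.1
  linarith [hnn x₀ hx₀]

end IsPosSol

theorem second_derivative_positive_at_endpoints_general
    (f : ℝ → ℝ) (r : ℝ)
    (hfpos : ∀ s ∈ Set.Ico (0:ℝ) r, 0 < f s)
    (lam : ℝ) (hlam : 0 < lam)
    (u : ℝ → ℝ) (hu : IsPosSol f r lam u) :
    0 < iteratedDerivWithin 2 u (Set.Icc 0 1) 0 ∧
    0 < iteratedDerivWithin 2 u (Set.Icc 0 1) 1 := by
  refine ⟨hu.iteratedDerivWithin_two_zero_pos hlam hfpos, ?_⟩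
  have hreflected := hu.comp_one_sub.iteratedDerivWithin_two_zero_pos hlam hfpos
  have hreflect := iteratedDerivWithin_comp_reflect_Icc u 2 0 1 0
  simp only [zero_add, sub_zero] at hreflect
  simpa [hreflect] using hreflected

/-- For any positive solution, `u''(0) > 0` and `u''(1) > 0`. -/
theorem second_derivative_positive_at_endpoints
    (f : ℝ → ℝ) (r : ℝ) (hr : 0 < r)
    (hf : ContDiffOn ℝ 1 f (Set.Ico 0 r))
    (hfpos : ∀ s ∈ Set.Ico (0:ℝ) r, 0 < f s)
    (hf' : ∀ s ∈ Set.Ioo (0:ℝ) r, 0 < derivWithin f (Set.Ico 0 r) s)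
    (lam : ℝ) (hlam : 0 < lam)
    (u : ℝ → ℝ) (hu : IsPosSol f r lam u) :
    0 < iteratedDerivWithin 2 u (Set.Icc 0 1) 0 ∧
    0 < iteratedDerivWithin 2 u (Set.Icc 0 1) 1 :=
  second_derivative_positive_at_endpoints_general f r hfpos lam hlam u hu
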